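/- arXiv:2301.10519 — 2 statements merged into one kernel-verified Lean document; each statement's English description precedes it below -/
import Mathlib

section
/- The family of MFO-definable languages is not closed under the Kleene star operation: over the one-letter alphabet {a}, the language L_aa = {aa} is MFO-definable, but its Kleene star L_aa* restricted to nonempty strings, which equals L_even = { a^(2n) | n ≥ 1 }, is not MFO-definable. -/
/-- Formulas of monadic first-order logic of order (MFO) over alphabet `α`.
First-order variables are represented by natural numbers. -/
inductive MFO (α : Type) : Type
  | char : α → ℕ → MFO α          -- `a(x)`
  | lt : ℕ → ℕ → MFO α            -- `x < y`
  | not : MFO α → MFO α           -- `¬ φ`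
  | or : MFO α → MFO α → MFO α    -- `φ ∨ ψ`
  | ex : ℕ → MFO α → MFO α        -- `∃ x. φ`

namespace MFO

/-- Satisfaction of an MFO formula over a string `w` with assignment `ν`
mapping variables to positions of `w`. -/
def Sat {α : Type} (w : List α) : (ℕ → ℕ) → MFO α → Prop
  | ν, .char a x => w[ν x]? = some a
  | ν, .lt x y => ν x < ν y
  | ν, .not φ => ¬ Sat w ν φ
  | ν, .or φ ψ => Sat w ν φ ∨ Sat w ν ψ
  | ν, .ex x φ => ∃ i < w.length, Sat w (Function.update ν x i) φ

/-- Free variables of an MFO formula. -/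
def fv {α : Type} : MFO α → Finset ℕ
  | .char _ x => {x}
  | .lt x y => {x, y}
  | .not φ => fv φ
  | .or φ ψ => fv φ ∪ fv ψ
  | .ex x φ => fv φ \ {x}

/-- The language of nonempty strings defined by an MFO formula
(intended to be used with sentences, whose satisfaction does not
depend on the assignment). -/
def Lang {α : Type} (φ : MFO α) : Set (List α) :=
  {w | w ≠ [] ∧ Sat w (fun _ => 0) φ}

/-- `φ₁ ∧ φ₂` as the abbreviation `¬(¬φ₁ ∨ ¬φ₂)`. -/
def and {α : Type} (φ ψ : MFO α) : MFO α := .not (.or (.not φ) (.not ψ))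

/-- A language (of nonempty strings) is MFO-definable iff it is the language
of some MFO sentence (closed formula). -/
def Definable {α : Type} (L : Set (List α)) : Prop :=
  ∃ φ : MFO α, φ.fv = ∅ ∧ L = Lang φ

end MFO

open Computability

/-- `L_even = { a^(2n) | n ≥ 1 }`: nonempty strings of even length over the
one-letter alphabet (modeled by `Unit`). -/
def Leven : Set (List Unit) := {w | w ≠ [] ∧ Even w.length}


/-! An Ehrenfeucht–Fraïssé argument. Call two configurations of points in `ℤ` `k`-equivalent
when every pairwise distance is the same in both, or at least `2 ^ k` in both, or at most
`-2 ^ k` in both. Place the sentinels `-1` and `|w|` next to the positions assigned to the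
variables; a new point in one configuration can then be answered in the other, inside the
word, at the price of passing from `k + 1` to `k`. So a sentence of quantifier depth `k`
cannot distinguish two unary words of lengths at least `2 ^ k - 1`, and no such sentence
defines the words of even length. The language `{aa}` is defined by "at least two positions,
but not three". -/

namespace MFO

variable {α : Type}

def qdepth : MFO α → ℕ
  | .char _ _ => 0
  | .lt _ _ => 0
  | .not φ => qdepth φ
  | .or φ ψ => max (qdepth φ) (qdepth ψ)
  | .ex _ φ => qdepth φ + 1

@[simp]
theorem sat_and {w : List α} {ν : ℕ → ℕ} {φ ψ : MFO α} :
    Sat w ν (φ.and ψ) ↔ Sat w ν φ ∧ Sat w ν ψ := by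
  simp only [MFO.and, Sat, not_or, not_not]

end MFO

def DistEquiv (k : ℕ) (a b : ℤ) : Prop :=
  a = b ∨ (2 ^ k ≤ a ∧ 2 ^ k ≤ b) ∨ (a ≤ -2 ^ k ∧ b ≤ -2 ^ k)

namespace DistEquiv

variable {k : ℕ} {a b : ℤ}

theorem refl (k : ℕ) (a : ℤ) : DistEquiv k a a := Or.inl rfl

theorem symm (h : DistEquiv k a b) : DistEquiv k b a := by
  unfold DistEquiv at *; omega

theorem neg (h : DistEquiv k a b) : DistEquiv k (-a) (-b) := by
  unfold DistEquiv at *; omega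

theorem mono {k' : ℕ} (hk : k' ≤ k) (h : DistEquiv k a b) : DistEquiv k' a b := by
  have : (2 : ℤ) ^ k' ≤ 2 ^ k := pow_le_pow_right₀ one_le_two hk
  unfold DistEquiv at *; omega

theorem pos_iff (h : DistEquiv k a b) : 0 < a ↔ 0 < b := by
  have : (0 : ℤ) < 2 ^ k := by positivity
  unfold DistEquiv at *; omega

theorem nonneg_iff (h : DistEquiv k a b) : 0 ≤ a ↔ 0 ≤ b := by
  have : (0 : ℤ) < 2 ^ k := by positivity
  unfold DistEquiv at *; omega

theorem two_pow_le (h : DistEquiv k a b) (ha : 2 ^ k ≤ a) : 2 ^ k ≤ b := by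
  have : (0 : ℤ) < 2 ^ k := by positivity
  unfold DistEquiv at *; omega

theorem add_left_of_abs_le (h : DistEquiv (k + 1) a b) {c : ℤ} (hc : |c| ≤ 2 ^ k) :
    DistEquiv k (c + a) (c + b) := by
  rw [abs_le] at hc
  unfold DistEquiv at *
  rw [pow_succ] at h
  omega

end DistEquiv

def DistEquivOn {ι : Type} (k : ℕ) (T : Finset ι) (u v : ι → ℤ) : Prop :=
  ∀ p ∈ T, ∀ q ∈ T, DistEquiv k (u q - u p) (v q - v p)

namespace DistEquivOn

variable {ι : Type} {k : ℕ} {T : Finset ι} {u v : ι → ℤ}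

theorem symm (h : DistEquivOn k T u v) : DistEquivOn k T v u :=
  fun p hp q hq => (h p hp q hq).symm

theorem mono {T' : Finset ι} (hT : T' ⊆ T) (h : DistEquivOn k T u v) : DistEquivOn k T' u v :=
  fun p hp q hq => h p (hT hp) q (hT hq)

/-- If `i` lies within `2 ^ k` of some point `u p`, answer at the same offset from `v p`;
otherwise answer `2 ^ k` above the image of the largest point below `i`. -/
theorem exists_distEquiv_sub (h : DistEquivOn (k + 1) T u v) {i : ℤ}
    (hlow : ∃ p ∈ T, u p < i) : ∃ j, ∀ p ∈ T, DistEquiv k (i - u p) (j - v p) := by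
  classical
  by_cases hnear : ∃ p ∈ T, |i - u p| ≤ 2 ^ k
  · obtain ⟨p, hp, hip⟩ := hnear
    refine ⟨v p + (i - u p), fun q hq => ?_⟩
    have := (h q hq p hp).add_left_of_abs_le hip
    convert this using 1 <;> ring
  push Not at hnear
  obtain ⟨p, hpT, hpi⟩ := hlow
  obtain ⟨p, hp, hmax⟩ := (T.filter (u · < i)).exists_max_image u
    ⟨p, Finset.mem_filter.2 ⟨hpT, hpi⟩⟩
  obtain ⟨hpT, hpi⟩ := Finset.mem_filter.1 hp
  have hgap : ∀ q ∈ T, 2 ^ k < |i - u q| := hnear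
  refine ⟨v p + 2 ^ k, fun q hq => ?_⟩
  have hpq := hgap p hpT
  have hqq := hgap q hq
  rw [lt_abs] at hpq hqq
  rcases lt_or_ge (u q) i with hqi | hiq
  · have hup := hmax q (Finset.mem_filter.2 ⟨hq, hqi⟩)
    have hvq := (h q hq p hpT).nonneg_iff.1 (by omega)
    exact Or.inr (Or.inl ⟨by omega, by omega⟩)
  · have hv := (h p hpT q hq).two_pow_le (by rw [pow_succ]; omega)
    rw [pow_succ] at hv
    exact Or.inr (Or.inr ⟨by omega, by omega⟩)

theorem exists_update [DecidableEq ι] (h : DistEquivOn (k + 1) T u v) {x : ι} (hx : x ∉ T)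
    {i : ℤ} (hlow : ∃ p ∈ T, u p < i) :
    ∃ j, DistEquivOn k (insert x T) (Function.update u x i) (Function.update v x j) := by
  obtain ⟨j, hj⟩ := h.exists_distEquiv_sub hlow
  have hne : ∀ p ∈ T, p ≠ x := fun p hp hpx => hx (hpx ▸ hp)
  simp only [DistEquivOn, Finset.forall_mem_insert]
  refine ⟨j, ⟨?_, fun q hq => ?_⟩, fun p hp => ⟨?_, fun q hq => ?_⟩⟩
  · simpa using DistEquiv.refl k 0
  · simpa [Function.update_of_ne (hne q hq)] using (hj q hq).neg
  · simpa [Function.update_of_ne (hne p hp)] using hj p hp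
  · simpa [Function.update_of_ne (hne p hp), Function.update_of_ne (hne q hq)] using
      (h p hp q hq).mono k.le_succ

end DistEquivOn

theorem List.eq_iff_length_eq_of_subsingleton {β : Type} [Subsingleton β] {l₁ l₂ : List β} :
    l₁ = l₂ ↔ l₁.length = l₂.length :=
  ⟨congrArg _, fun h => List.ext_getElem h fun _ _ _ => Subsingleton.elim _ _⟩

namespace MFO

variable {α : Type}

def positions (w : List α) (ν : ℕ → ℕ) : Option (Option ℕ) → ℤ
  | none => -1
  | some none => w.length
  | some (some y) => ν y

def pointIndices (S : Finset ℕ) : Finset (Option (Option ℕ)) :=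
  insert none (insert (some none) (S.image (some ∘ some)))

theorem positions_update (w : List α) (ν : ℕ → ℕ) (x i : ℕ) :
    positions w (Function.update ν x i) = Function.update (positions w ν) (some (some x)) i := by
  funext p
  rcases p with _ | _ | y
  · rfl
  · rfl
  · by_cases hy : y = x
    · subst hy; simp [positions]
    · simp [positions, hy]

@[simp]
theorem some_some_mem_pointIndices {S : Finset ℕ} {x : ℕ} :
    some (some x) ∈ pointIndices S ↔ x ∈ S := by
  simp [pointIndices]

theorem pointIndices_insert (S : Finset ℕ) (x : ℕ) :
    pointIndices (insert x S) = insert (some (some x)) (pointIndices S) := by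
  ext p
  simp only [pointIndices, Finset.image_insert, Finset.mem_insert]
  tauto

theorem pointIndices_mono {S S' : Finset ℕ} (h : S ⊆ S') :
    pointIndices S ⊆ pointIndices S' := by
  unfold pointIndices
  gcongr

theorem exists_update_positions {k : ℕ} {w w' : List α} {ν ν' : ℕ → ℕ}
    {S : Finset ℕ} (h : DistEquivOn (k + 1) (pointIndices S) (positions w ν) (positions w' ν'))
    {x : ℕ} (hx : x ∉ S) {i : ℕ} (hi : i < w.length) :
    ∃ j < w'.length, DistEquivOn k (pointIndices (insert x S))
      (positions w (Function.update ν x i)) (positions w' (Function.update ν' x j)) := by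
  obtain ⟨j, hj⟩ := h.exists_update (x := some (some x)) (by simpa using hx) (i := i)
    ⟨none, by simp [pointIndices], by simp only [positions]; omega⟩
  have hlow := (hj none (Finset.mem_insert_of_mem (by simp [pointIndices])) _
    (Finset.mem_insert_self _ _)).pos_iff
  have hhigh := (hj _ (Finset.mem_insert_self _ _) (some none)
    (Finset.mem_insert_of_mem (by simp [pointIndices]))).pos_iff
  simp only [Function.update_apply, positions, Option.some.injEq, reduceCtorEq, if_true,
    if_false] at hlow hhigh
  lift j to ℕ using by omega
  exact ⟨j, by omega, by rwa [pointIndices_insert, positions_update, positions_update]⟩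

theorem sat_char_iff {w : List Unit} {ν : ℕ → ℕ} {a : Unit} {x : ℕ} :
    Sat w ν (.char a x) ↔ ν x < w.length := by
  simp [Sat, List.getElem?_eq_some_iff]

theorem sat_iff_of_distEquivOn {φ : MFO Unit} {k : ℕ} (hk : φ.qdepth ≤ k)
    {w w' : List Unit} {ν ν' : ℕ → ℕ}
    (h : DistEquivOn k (pointIndices φ.fv) (positions w ν) (positions w' ν')) :
    Sat w ν φ ↔ Sat w' ν' φ := by
  induction φ generalizing k ν ν' with
  | char a x =>
    have := (h (some (some x)) (by simp [fv]) (some none) (by simp [pointIndices])).pos_iff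
    simp only [positions, sub_pos, Nat.cast_lt] at this
    rwa [sat_char_iff, sat_char_iff]
  | lt x y =>
    have := (h (some (some x)) (by simp [fv]) (some (some y)) (by simp [fv])).pos_iff
    simpa only [Sat, positions, sub_pos, Nat.cast_lt] using this
  | not φ ih => exact not_congr (ih hk h)
  | or φ ψ ihφ ihψ =>
    exact or_congr
      (ihφ (le_of_max_le_left hk) (h.mono (pointIndices_mono Finset.subset_union_left)))
      (ihψ (le_of_max_le_right hk) (h.mono (pointIndices_mono Finset.subset_union_right)))
  | ex x φ ih =>
    obtain _ | t := k
    · simp [qdepth] at hk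
    have hqd : φ.qdepth ≤ t := by simpa [qdepth] using hk
    have hfv : pointIndices φ.fv ⊆ pointIndices (insert x (φ.fv \ {x})) :=
      pointIndices_mono (by intro y; by_cases y = x <;> simp_all)
    have hx : x ∉ φ.fv \ {x} := by simp
    constructor
    · rintro ⟨i, hi, hsat⟩
      obtain ⟨j, hj, h'⟩ := exists_update_positions h hx hi
      exact ⟨j, hj, (ih hqd (h'.mono hfv)).1 hsat⟩
    · rintro ⟨j, hj, hsat⟩
      obtain ⟨i, hi, h'⟩ := exists_update_positions h.symm hx hj
      exact ⟨i, hi, (ih hqd (h'.symm.mono hfv)).2 hsat⟩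

theorem sat_iff_of_fv_eq_empty {φ : MFO Unit} (hφ : φ.fv = ∅) {w w' : List Unit}
    (hw : 2 ^ φ.qdepth ≤ w.length + 1) (hw' : 2 ^ φ.qdepth ≤ w'.length + 1)
    (ν ν' : ℕ → ℕ) :
    Sat w ν φ ↔ Sat w' ν' φ := by
  refine sat_iff_of_distEquivOn le_rfl fun p hp q hq => ?_
  simp only [hφ, pointIndices, Finset.image_empty, Finset.mem_insert,
    Finset.notMem_empty, or_false] at hp hq
  zify at hw hw'
  rcases hp with rfl | rfl <;> rcases hq with rfl | rfl <;>
    simp only [positions] <;> unfold DistEquiv <;> omega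

theorem Definable.exists_mem_iff_of_le_length {L : Set (List Unit)} (hL : Definable L) :
    ∃ N, ∀ w w' : List Unit, N ≤ w.length → N ≤ w'.length → (w ∈ L ↔ w' ∈ L) := by
  obtain ⟨φ, hφ, rfl⟩ := hL
  refine ⟨2 ^ φ.qdepth, fun w w' hw hw' => ?_⟩
  have hpos := Nat.one_le_two_pow (n := φ.qdepth)
  exact and_congr (iff_of_true (List.ne_nil_of_length_pos (by omega))
    (List.ne_nil_of_length_pos (by omega))) (sat_iff_of_fv_eq_empty hφ (by omega) (by omega) _ _)

theorem not_definable_Leven : ¬ Definable Leven := fun hL => by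
  obtain ⟨N, hN⟩ := hL.exists_mem_iff_of_le_length
  have := hN (List.replicate (2 * N + 2) ()) (List.replicate (2 * N + 3) ())
    (by simp only [List.length_replicate]; omega) (by simp only [List.length_replicate]; omega)
  simp [Leven, Nat.even_add_one] at this

def atLeastTwo : MFO α := .ex 0 (.ex 1 (.lt 0 1))

def atLeastThree : MFO α := .ex 0 (.ex 1 (.ex 2 ((MFO.lt 0 1).and (.lt 1 2))))

theorem sat_atLeastTwo {w : List α} {ν : ℕ → ℕ} :
    Sat w ν atLeastTwo ↔ 2 ≤ w.length := by
  simp only [atLeastTwo, Sat, Function.update_apply]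
  constructor
  · rintro ⟨i, hi, j, hj, hij⟩
    simp only [zero_ne_one, ↓reduceIte] at hij
    omega
  · intro h
    exact ⟨0, by omega, 1, by omega, by simp⟩

theorem sat_atLeastThree {w : List α} {ν : ℕ → ℕ} :
    Sat w ν atLeastThree ↔ 3 ≤ w.length := by
  simp only [atLeastThree, Sat, sat_and, Function.update_apply]
  constructor
  · rintro ⟨i, hi, j, hj, l, hl, hij, hjl⟩
    simp only [OfNat.zero_ne_ofNat, ↓reduceIte, zero_ne_one, OfNat.one_ne_ofNat] at hij hjl
    omega
  · intro h
    exact ⟨0, by omega, 1, by omega, 2, by omega, by simp, by simp⟩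

theorem definable_singleton_pair : Definable ({[(), ()]} : Set (List Unit)) := by
  refine ⟨atLeastTwo.and atLeastThree.not, by decide, ?_⟩
  ext w
  simp only [Set.mem_singleton_iff, Lang, Set.mem_ofPred_eq, sat_and, Sat, sat_atLeastTwo,
    sat_atLeastThree, List.eq_iff_length_eq_of_subsingleton, ne_eq]
  simp only [List.length_cons, List.length_nil]
  omega

end MFO

theorem Language.mem_kstar_singleton_replicate_unit {d : ℕ} {w : List Unit} :
    w ∈ ({List.replicate d ()} : Language Unit)∗ ↔ d ∣ w.length := by
  rw [Language.mem_kstar]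
  constructor
  · rintro ⟨L, rfl, hL⟩
    rw [List.eq_replicate_iff.2 ⟨rfl, hL⟩, List.flatten_replicate_replicate,
      List.length_replicate]
    exact dvd_mul_left _ _
  · rintro ⟨c, hc⟩
    refine ⟨List.replicate c (List.replicate d ()), ?_, fun y hy => List.eq_of_mem_replicate hy⟩
    rw [List.flatten_replicate_replicate, List.eq_iff_length_eq_of_subsingleton,
      List.length_replicate, hc, mul_comm]

theorem kstar_pair_eq_Leven :
    {w | w ∈ ({[(), ()]} : Language Unit)∗ ∧ w ≠ []} = Leven := by
  ext w
  rw [Set.mem_ofPred_eq, show [(), ()] = List.replicate 2 () from rfl,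
    Language.mem_kstar_singleton_replicate_unit, ← even_iff_two_dvd, and_comm]
  rfl

/-- MFO-definable languages are not closed under Kleene star:
`L_aa = {aa}` is MFO-definable, but `L_aa*` restricted to nonempty strings,
which equals `L_even`, is not MFO-definable. -/
theorem mfo_not_closed_under_star :
    MFO.Definable ({[(), ()]} : Set (List Unit)) ∧
    {w | w ∈ ({[(), ()]} : Language Unit)∗ ∧ w ≠ []} = Leven ∧
    ¬ MFO.Definable Leven :=
  ⟨MFO.definable_singleton_pair, kstar_pair_eq_Leven, MFO.not_definable_Leven⟩
end

section
/- The set of MSO-definable languages over a fixed finite alphabet Σ is closed under union, intersection, complementation (relative to Σ⁺), and Kleene star (restricted to nonempty strings). -/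
/-- Formulas of monadic second-order logic of order (MSO) over alphabet `α`.
First-order and second-order (set) variables are represented by naturals. -/
inductive MSO (α : Type) : Type
  | char : α → ℕ → MSO α          -- `a(x)`
  | mem : ℕ → ℕ → MSO α           -- `X(x)` : `mem X x`
  | lt : ℕ → ℕ → MSO α            -- `x < y`
  | not : MSO α → MSO α
  | or : MSO α → MSO α → MSO α
  | ex1 : ℕ → MSO α → MSO α       -- `∃ x. φ`
  | ex2 : ℕ → MSO α → MSO α       -- `∃ X. φ`

namespace MSO

/-- Satisfaction of an MSO formula over a string `w` with first-order
assignment `ν₁` (positions) and second-order assignment `ν₂` (sets of positions). -/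
def Sat {α : Type} (w : List α) : (ℕ → ℕ) → (ℕ → Set ℕ) → MSO α → Prop
  | ν₁, _, .char a x => w[ν₁ x]? = some a
  | ν₁, ν₂, .mem X x => ν₁ x ∈ ν₂ X
  | ν₁, _, .lt x y => ν₁ x < ν₁ y
  | ν₁, ν₂, .not φ => ¬ Sat w ν₁ ν₂ φ
  | ν₁, ν₂, .or φ ψ => Sat w ν₁ ν₂ φ ∨ Sat w ν₁ ν₂ ψ
  | ν₁, ν₂, .ex1 x φ => ∃ i < w.length, Sat w (Function.update ν₁ x i) ν₂ φ
  | ν₁, ν₂, .ex2 X φ =>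
      ∃ S : Set ℕ, (∀ i ∈ S, i < w.length) ∧ Sat w ν₁ (Function.update ν₂ X S) φ

/-- Free first-order variables of an MSO formula. -/
def fv1 {α : Type} : MSO α → Finset ℕ
  | .char _ x => {x}
  | .mem _ x => {x}
  | .lt x y => {x, y}
  | .not φ => fv1 φ
  | .or φ ψ => fv1 φ ∪ fv1 ψ
  | .ex1 x φ => fv1 φ \ {x}
  | .ex2 _ φ => fv1 φ

/-- Free second-order variables of an MSO formula. -/
def fv2 {α : Type} : MSO α → Finset ℕ
  | .char _ _ => ∅
  | .mem X _ => {X}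
  | .lt _ _ => ∅
  | .not φ => fv2 φ
  | .or φ ψ => fv2 φ ∪ fv2 ψ
  | .ex1 _ φ => fv2 φ
  | .ex2 X φ => fv2 φ \ {X}

/-- The language of nonempty strings defined by an MSO formula
(intended to be used with sentences). -/
def Lang {α : Type} (φ : MSO α) : Set (List α) :=
  {w | w ≠ [] ∧ Sat w (fun _ => 0) (fun _ => ∅) φ}

/-- A language (of nonempty strings) is MSO-definable iff it is the language
of some MSO sentence (closed formula). -/
def Definable {α : Type} (L : Set (List α)) : Prop :=
  ∃ φ : MSO α, φ.fv1 = ∅ ∧ φ.fv2 = ∅ ∧ L = Lang φ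

end MSO

/-! Union, intersection and complement are given by `∨`, `∧` and `¬`. For the star, a nonempty
word lies in `(Lang φ)∗` iff some set `X` of positions containing the first one cuts it into
blocks, each running from an element of `X` to the next one (or to the end of the word), that all
satisfy `φ`. That a block satisfies `φ` is expressed inside the whole word by restricting the
first-order quantifiers of `φ` to a set variable `Y` pinned to the block. -/

namespace List

variable {α : Type*}

theorem length_extract_of_le {w : List α} {b e : ℕ} (he : e ≤ w.length) :
    (w.extract b e).length = e - b := by
  simp only [extract_eq_take_drop, length_take, length_drop]
  omega

theorem getElem?_extract_of_lt {w : List α} {b e i : ℕ} (hi : i < e - b) :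
    (w.extract b e)[i]? = w[b + i]? := by
  simp [hi]

end List

theorem Nat.exists_lt_sub_iff_of_shift {b e n : ℕ} {P Q : ℕ → Prop} (he : e ≤ n)
    (h : ∀ i < e - b, P i ↔ Q (b + i)) :
    (∃ i < e - b, P i) ↔ ∃ j < n, j ∈ Set.Ico b e ∧ Q j := by
  constructor
  · rintro ⟨i, hi, hP⟩
    exact ⟨b + i, by omega, ⟨by omega, by omega⟩, (h i hi).1 hP⟩
  · rintro ⟨j, -, ⟨hbj, hje⟩, hQ⟩
    obtain ⟨i, rfl⟩ := Nat.exists_eq_add_of_le hbj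
    exact ⟨i, by omega, (h i (by omega)).2 hQ⟩

theorem Set.exists_subset_Iio_sub_iff_of_shift {b e n : ℕ} {P Q : Set ℕ → Prop} (he : e ≤ n)
    (h : ∀ S S' : Set ℕ, (∀ i < e - b, i ∈ S ↔ b + i ∈ S') → (P S ↔ Q S')) :
    (∃ S : Set ℕ, (∀ i ∈ S, i < e - b) ∧ P S) ↔ ∃ S' : Set ℕ, (∀ j ∈ S', j < n) ∧ Q S' := by
  constructor
  · rintro ⟨S, hS, hP⟩
    refine ⟨(b + ·) '' S, ?_, (h _ _ fun i _ => ?_).1 hP⟩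
    · rintro _ ⟨i, hi, rfl⟩
      have := hS i hi
      dsimp only
      omega
    · simp
  · rintro ⟨S', -, hQ⟩
    refine ⟨{i | i < e - b ∧ b + i ∈ S'}, fun i hi => hi.1, (h _ _ fun i hi => ?_).2 hQ⟩
    simp [hi]

namespace Language

open Computability

variable {α : Type*}

noncomputable def blockEnd (S : Set ℕ) (n p : ℕ) : ℕ := sInf (insert n {q | q ∈ S ∧ p < q})

variable {S : Set ℕ} {n p : ℕ}

theorem blockEnd_mem (S : Set ℕ) (n p : ℕ) :
    blockEnd S n p = n ∨ (blockEnd S n p ∈ S ∧ p < blockEnd S n p) :=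
  Nat.sInf_mem (Set.insert_nonempty _ _)

theorem blockEnd_le : blockEnd S n p ≤ n := Nat.sInf_le (Set.mem_insert _ _)

theorem blockEnd_le_of_mem {q : ℕ} (hq : q ∈ S) (hpq : p < q) : blockEnd S n p ≤ q :=
  Nat.sInf_le (Set.mem_insert_of_mem _ ⟨hq, hpq⟩)

theorem lt_blockEnd_iff {z : ℕ} : z < blockEnd S n p ↔ z < n ∧ ∀ q ∈ S, p < q → z < q := by
  rw [← Nat.succ_le_iff, blockEnd, le_csInf_iff' (Set.insert_nonempty _ _)]
  simp [lowerBounds]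

theorem blockEnd_eq {e : ℕ} (hpe : p < e) (hen : e ≤ n) (he : e = n ∨ e ∈ S)
    (hmin : ∀ q ∈ S, p < q → e ≤ q) : blockEnd S n p = e := by
  refine le_antisymm ?_ ?_
  · rcases he with rfl | he
    exacts [blockEnd_le, blockEnd_le_of_mem he hpe]
  · rcases blockEnd_mem S n p with h | ⟨h, hp⟩
    · rw [h]; exact hen
    · exact hmin _ h hp

theorem lt_blockEnd (hpn : p < n) : p < blockEnd S n p :=
  lt_blockEnd_iff.2 ⟨hpn, fun _ _ h => h⟩

structure IsFactorStarts (L : Language α) (w : List α) (S : Set ℕ) : Prop where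
  zero_mem : 0 ∈ S
  lt_length : ∀ p ∈ S, p < w.length
  extract_mem : ∀ p ∈ S, w.extract p (blockEnd S w.length p) ∈ L

theorem IsFactorStarts.drop_mem_kstar {L : Language α} {w : List α} (hS : IsFactorStarts L w S)
    {p : ℕ} (hp : p ∈ S) : w.drop p ∈ L∗ := by
  induction h : w.length - p using Nat.strong_induction_on generalizing p with
  | _ m ih =>
    set e := blockEnd S w.length p
    have hsplit : w.drop p = w.extract p e ++ w.drop e := by
      have hpe : p < e := lt_blockEnd (hS.lt_length p hp)
      have hdrop : w.drop e = (w.drop p).drop (e - p) := by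
        rw [List.drop_drop, Nat.add_sub_cancel' hpe.le]
      rw [List.extract_eq_take_drop, hdrop, List.take_append_drop]
    have hrest : w.drop e ∈ L∗ := by
      rcases blockEnd_mem S w.length p with he | ⟨he, hpe⟩
      · simp [e, he, nil_mem_kstar]
      · exact ih _ (by have := hS.lt_length e he; omega) he rfl
    rw [hsplit]
    exact mul_kstar_le_kstar (α := Language α) (append_mem_mul (hS.extract_mem p hp) hrest)

theorem exists_isFactorStarts_flatten {L : Language α} {l : List (List α)} (hl₀ : l ≠ [])
    (hl : ∀ u ∈ l, u ∈ L ∧ u ≠ []) : ∃ S, IsFactorStarts L l.flatten S := by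
  set ps : ℕ → ℕ := fun i => ((l.map List.length).take i).sum
  have hmono : Monotone ps := List.monotone_sum_take _
  have hstep : ∀ i (hi : i < l.length), ps i < ps (i + 1) := by
    intro i hi
    simp only [ps, List.sum_take_succ (l.map List.length) i (by simpa using hi), List.getElem_map]
    exact Nat.lt_add_of_pos_right (List.length_pos_iff.2 (hl _ (List.getElem_mem hi)).2)
  have hlen : ps l.length = l.flatten.length := by
    simp only [ps, List.length_flatten]
    rw [List.take_of_length_le (by simp)]
  refine ⟨ps '' Set.Iio l.length, ⟨0, List.length_pos_iff.2 hl₀, rfl⟩, ?_, ?_⟩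
  · rintro _ ⟨i, hi, rfl⟩
    exact hlen ▸ (hstep i hi).trans_le (hmono hi)
  · rintro _ ⟨i, hi, rfl⟩
    have hend : blockEnd (ps '' Set.Iio l.length) l.flatten.length (ps i) = ps (i + 1) := by
      refine blockEnd_eq (hstep i hi) (hlen ▸ hmono hi) ?_ ?_
      · rcases (show i + 1 ≤ l.length from hi).eq_or_lt with h | h
        · exact .inl (by rw [h, hlen])
        · exact .inr ⟨i + 1, h, rfl⟩
      · rintro _ ⟨j, -, rfl⟩ hij
        exact hmono (hmono.reflect_lt hij)
    rw [hend, List.extract_eq_take_drop, ← List.drop_take, List.drop_take_succ_flatten_eq_getElem]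
    exact (hl _ (List.getElem_mem hi)).1

theorem mem_kstar_and_ne_nil_iff {L : Language α} (hL : [] ∉ L) {w : List α} :
    w ∈ L∗ ∧ w ≠ [] ↔ ∃ S, IsFactorStarts L w S := by
  constructor
  · rintro ⟨hw, hw₀⟩
    obtain ⟨l, rfl, hl⟩ := mem_kstar.1 hw
    refine exists_isFactorStarts_flatten (by rintro rfl; simp at hw₀) fun u hu => ⟨hl u hu, ?_⟩
    rintro rfl
    exact hL (hl [] hu)
  · rintro ⟨S, hS⟩
    refine ⟨by simpa using hS.drop_mem_kstar hS.zero_mem, ?_⟩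
    exact List.ne_nil_of_length_pos (hS.lt_length 0 hS.zero_mem)

end Language

namespace MSO

open Function Computability Language

variable {α : Type}

section Connectives

variable {w : List α} {ν₁ : ℕ → ℕ} {ν₂ : ℕ → Set ℕ} {φ ψ : MSO α} {a : α} {x y X : ℕ}

@[simp] theorem sat_char : Sat w ν₁ ν₂ (.char a x) ↔ w[ν₁ x]? = some a := Iff.rfl
@[simp] theorem sat_mem : Sat w ν₁ ν₂ (.mem X x) ↔ ν₁ x ∈ ν₂ X := Iff.rfl
@[simp] theorem sat_lt : Sat w ν₁ ν₂ (.lt x y) ↔ ν₁ x < ν₁ y := Iff.rfl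
@[simp] theorem sat_not : Sat w ν₁ ν₂ (.not φ) ↔ ¬ Sat w ν₁ ν₂ φ := Iff.rfl
@[simp] theorem sat_or : Sat w ν₁ ν₂ (.or φ ψ) ↔ Sat w ν₁ ν₂ φ ∨ Sat w ν₁ ν₂ ψ := Iff.rfl
@[simp] theorem sat_ex1 :
    Sat w ν₁ ν₂ (.ex1 x φ) ↔ ∃ i < w.length, Sat w (update ν₁ x i) ν₂ φ := Iff.rfl
@[simp] theorem sat_ex2 :
    Sat w ν₁ ν₂ (.ex2 X φ) ↔
      ∃ S : Set ℕ, (∀ i ∈ S, i < w.length) ∧ Sat w ν₁ (update ν₂ X S) φ := Iff.rfl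

def conj (φ ψ : MSO α) : MSO α := .not (.or (.not φ) (.not ψ))
def imp (φ ψ : MSO α) : MSO α := .or (.not φ) ψ
def iff (φ ψ : MSO α) : MSO α := conj (imp φ ψ) (imp ψ φ)
def all (x : ℕ) (φ : MSO α) : MSO α := .not (.ex1 x (.not φ))

@[simp] theorem sat_conj : Sat w ν₁ ν₂ (conj φ ψ) ↔ Sat w ν₁ ν₂ φ ∧ Sat w ν₁ ν₂ ψ := by
  simp [conj]
@[simp] theorem sat_imp : Sat w ν₁ ν₂ (imp φ ψ) ↔ (Sat w ν₁ ν₂ φ → Sat w ν₁ ν₂ ψ) := by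
  simp [imp, imp_iff_not_or]
@[simp] theorem sat_iff : Sat w ν₁ ν₂ (iff φ ψ) ↔ (Sat w ν₁ ν₂ φ ↔ Sat w ν₁ ν₂ ψ) := by
  simp [iff, iff_def]
@[simp] theorem sat_all : Sat w ν₁ ν₂ (all x φ) ↔ ∀ i < w.length, Sat w (update ν₁ x i) ν₂ φ := by
  simp [all]

@[simp] theorem fv1_conj : (conj φ ψ).fv1 = φ.fv1 ∪ ψ.fv1 := rfl
@[simp] theorem fv1_imp : (imp φ ψ).fv1 = φ.fv1 ∪ ψ.fv1 := rfl
@[simp] theorem fv1_iff : (iff φ ψ).fv1 = φ.fv1 ∪ ψ.fv1 := by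
  simp [iff, Finset.union_comm]
@[simp] theorem fv1_all : (all x φ).fv1 = φ.fv1 \ {x} := rfl
@[simp] theorem fv2_conj : (conj φ ψ).fv2 = φ.fv2 ∪ ψ.fv2 := rfl
@[simp] theorem fv2_imp : (imp φ ψ).fv2 = φ.fv2 ∪ ψ.fv2 := rfl
@[simp] theorem fv2_iff : (iff φ ψ).fv2 = φ.fv2 ∪ ψ.fv2 := by
  simp [iff, Finset.union_comm]
@[simp] theorem fv2_all : (all x φ).fv2 = φ.fv2 := rfl

end Connectives

def vars2 : MSO α → Finset ℕ
  | .char _ _ => ∅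
  | .mem X _ => {X}
  | .lt _ _ => ∅
  | .not φ => vars2 φ
  | .or φ ψ => vars2 φ ∪ vars2 ψ
  | .ex1 _ φ => vars2 φ
  | .ex2 X φ => insert X (vars2 φ)

/-- Set quantifiers need no restriction: only positions in `Y` are ever tested for membership. -/
def relativize (Y : ℕ) : MSO α → MSO α
  | .char a x => .char a x
  | .mem X x => .mem X x
  | .lt x y => .lt x y
  | .not φ => .not (relativize Y φ)
  | .or φ ψ => .or (relativize Y φ) (relativize Y ψ)
  | .ex1 x φ => .ex1 x (conj (.mem Y x) (relativize Y φ))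
  | .ex2 X φ => .ex2 X (relativize Y φ)

@[simp] theorem fv1_relativize (Y : ℕ) (φ : MSO α) : (φ.relativize Y).fv1 = φ.fv1 := by
  induction φ with
  | char | mem | lt => rfl
  | not φ ih => simpa [relativize, fv1] using ih
  | or φ ψ ih₁ ih₂ => simp [relativize, fv1, ih₁, ih₂]
  | ex1 x φ ih =>
      simp [relativize, fv1, ih, Finset.insert_sdiff_of_mem _ (Finset.mem_singleton_self x)]
  | ex2 X φ ih => simpa [relativize, fv1] using ih

theorem fv2_relativize_subset (Y : ℕ) (φ : MSO α) :
    (φ.relativize Y).fv2 ⊆ insert Y φ.fv2 := by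
  induction φ with
  | char | mem | lt => simp [relativize, fv2]
  | not φ ih => simpa [relativize, fv2] using ih
  | or φ ψ ih₁ ih₂ =>
      simp only [relativize, fv2]
      exact Finset.union_subset (ih₁.trans (by grind)) (ih₂.trans (by grind))
  | ex1 x φ ih =>
      simpa [relativize, fv2] using Finset.insert_subset (Finset.mem_insert_self Y _) ih
  | ex2 X φ ih =>
      simp only [relativize, fv2]
      intro v hv
      have := ih (Finset.mem_sdiff.1 hv).1
      grind

section Shift

variable {m b : ℕ} {ν₁ μ₁ : ℕ → ℕ} {ν₂ μ₂ : ℕ → Set ℕ}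

theorem shift_update₁ {x i : ℕ} {s : Finset ℕ} (hi : i < m)
    (h : ∀ y ∈ s \ {x}, ν₁ y < m ∧ μ₁ y = b + ν₁ y) :
    ∀ y ∈ s, update ν₁ x i y < m ∧ update μ₁ x (b + i) y = b + update ν₁ x i y := by
  intro y hy
  rcases eq_or_ne y x with rfl | hne
  · simpa using hi
  · simpa [hne] using h y (by simp [hy, hne])

theorem shift_update₂ {X : ℕ} {s : Finset ℕ} {S S' : Set ℕ}
    (hS : ∀ i < m, i ∈ S ↔ b + i ∈ S')
    (h : ∀ Z ∈ s \ {X}, ∀ i < m, i ∈ ν₂ Z ↔ b + i ∈ μ₂ Z) :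
    ∀ Z ∈ s, ∀ i < m, i ∈ update ν₂ X S Z ↔ b + i ∈ update μ₂ X S' Z := by
  intro Z hZ
  rcases eq_or_ne Z X with rfl | hne
  · simpa using hS
  · simpa [hne] using h Z (by simp [hZ, hne])

end Shift

theorem sat_extract_iff_sat_relativize {w : List α} {b e Y : ℕ} (he : e ≤ w.length)
    {φ : MSO α} (hY : Y ∉ φ.vars2) {ν₁ μ₁ : ℕ → ℕ} {ν₂ μ₂ : ℕ → Set ℕ}
    (h₁ : ∀ x ∈ φ.fv1, ν₁ x < e - b ∧ μ₁ x = b + ν₁ x)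
    (h₂ : ∀ X ∈ φ.fv2, ∀ i < e - b, i ∈ ν₂ X ↔ b + i ∈ μ₂ X)
    (hμY : μ₂ Y = Set.Ico b e) :
    Sat (w.extract b e) ν₁ ν₂ φ ↔ Sat w μ₁ μ₂ (φ.relativize Y) := by
  induction φ generalizing ν₁ μ₁ ν₂ μ₂ with
  | char a x =>
      obtain ⟨hx, hμx⟩ := h₁ x (by simp [fv1])
      simp [relativize, hμx, List.getElem?_extract_of_lt hx]
  | mem X x =>
      obtain ⟨hx, hμx⟩ := h₁ x (by simp [fv1])
      simpa [relativize, hμx] using h₂ X (by simp [fv2]) _ hx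
  | lt x y =>
      obtain ⟨-, hμx⟩ := h₁ x (by simp [fv1])
      obtain ⟨-, hμy⟩ := h₁ y (by simp [fv1])
      simp [relativize, hμx, hμy]
  | not φ ih => exact (ih hY h₁ h₂ hμY).not
  | or φ ψ ih₁ ih₂ =>
      simp only [vars2, Finset.mem_union, not_or] at hY
      simp only [fv1, fv2, Finset.mem_union] at h₁ h₂
      exact or_congr (ih₁ hY.1 (fun x hx => h₁ x (.inl hx)) (fun X hX => h₂ X (.inl hX)) hμY)
        (ih₂ hY.2 (fun x hx => h₁ x (.inr hx)) (fun X hX => h₂ X (.inr hX)) hμY)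
  | ex1 x φ ih =>
      simp only [sat_ex1, relativize, sat_conj, sat_mem, update_self, hμY,
        List.length_extract_of_le he]
      exact Nat.exists_lt_sub_iff_of_shift he fun i hi => ih hY (shift_update₁ hi h₁) h₂ hμY
  | ex2 X φ ih =>
      have hXY : Y ≠ X := by rintro rfl; simp [vars2] at hY
      simp only [sat_ex2, relativize, List.length_extract_of_le he]
      exact Set.exists_subset_Iio_sub_iff_of_shift he fun S S' hS =>
        ih (by simp_all [vars2]) h₁ (shift_update₂ hS h₂) (by simpa [hXY] using hμY)

section StarSentence

def firstMem (X : ℕ) : MSO α := .ex1 0 (conj (.mem X 0) (all 1 (.not (.lt 1 0))))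

/-- `Y` is the block from the position of variable `0` up to, excluding, the next element of `X`. -/
def blockAt (X Y : ℕ) : MSO α :=
  all 2 (iff (.mem Y 2)
    (conj (.not (.lt 2 0)) (all 1 (imp (conj (.mem X 1) (.lt 0 1)) (.lt 2 1)))))

/-- For fresh `X ≠ Y`, this defines the Kleene star of `Lang φ`: `X` marks the starts of the
factors, and `Y` ranges over the factors. -/
def star (X Y : ℕ) (φ : MSO α) : MSO α :=
  .ex2 X (conj (firstMem X)
    (all 0 (imp (.mem X 0) (.ex2 Y (conj (blockAt X Y) (φ.relativize Y))))))

variable {w : List α} {ν₁ : ℕ → ℕ} {ν₂ : ℕ → Set ℕ} {X Y : ℕ}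

theorem sat_firstMem : Sat w ν₁ ν₂ (firstMem X) ↔ w ≠ [] ∧ 0 ∈ ν₂ X := by
  simp only [firstMem, sat_ex1, sat_conj, sat_mem, sat_all, sat_not, sat_lt, update_self,
    not_lt]
  constructor
  · rintro ⟨i, hi, hX, hmin⟩
    obtain rfl : i = 0 := by simpa [update_apply] using hmin 0 (by omega)
    exact ⟨List.ne_nil_of_length_pos hi, hX⟩
  · rintro ⟨hw, hX⟩
    exact ⟨0, List.length_pos_iff.2 hw, hX, by simp⟩

theorem sat_blockAt : Sat w ν₁ ν₂ (blockAt X Y) ↔ ∀ z < w.length,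
    (z ∈ ν₂ Y ↔ ν₁ 0 ≤ z ∧ ∀ q < w.length, q ∈ ν₂ X → ν₁ 0 < q → z < q) := by
  simp [blockAt]

theorem eq_Ico_blockEnd_iff {S T : Set ℕ} {n p : ℕ} (hS : ∀ q ∈ S, q < n)
    (hT : ∀ z ∈ T, z < n) :
    (∀ z < n, (z ∈ T ↔ p ≤ z ∧ ∀ q < n, q ∈ S → p < q → z < q)) ↔
      T = Set.Ico p (blockEnd S n p) := by
  have hIco : ∀ z, z ∈ Set.Ico p (blockEnd S n p) ↔
      z < n ∧ p ≤ z ∧ ∀ q < n, q ∈ S → p < q → z < q := by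
    intro z
    simp only [Set.mem_Ico, lt_blockEnd_iff]
    grind
  constructor
  · intro h
    ext z
    rw [hIco]
    exact ⟨fun hz => ⟨hT z hz, (h z (hT z hz)).1 hz⟩, fun ⟨hzn, hz⟩ => (h z hzn).2 hz⟩
  · rintro rfl z hz
    simp [hIco, hz]

theorem extract_mem_lang_iff {φ : MSO α} (hY : Y ∉ φ.vars2) (h₁ : φ.fv1 = ∅) (h₂ : φ.fv2 = ∅)
    {p e : ℕ} (hpe : p < e) (he : e ≤ w.length) {μ₁ : ℕ → ℕ} {μ₂ : ℕ → Set ℕ}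
    (hμY : μ₂ Y = Set.Ico p e) :
    w.extract p e ∈ Lang φ ↔ Sat w μ₁ μ₂ (φ.relativize Y) := by
  have hne : w.extract p e ≠ [] :=
    List.ne_nil_of_length_pos (by rw [List.length_extract_of_le he]; omega)
  simp only [Lang, Set.mem_ofPred_eq, ne_eq, hne, not_false_eq_true, true_and]
  exact sat_extract_iff_sat_relativize he hY (by simp [h₁]) (by simp [h₂]) hμY

theorem sat_star {φ : MSO α} (hXY : X ≠ Y) (hY : Y ∉ φ.vars2) (h₁ : φ.fv1 = ∅)
    (h₂ : φ.fv2 = ∅) : Sat w ν₁ ν₂ (star X Y φ) ↔ ∃ S, IsFactorStarts (Lang φ) w S := by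
  have hblock : ∀ (S : Set ℕ), (∀ q ∈ S, q < w.length) → ∀ p < w.length,
      Sat w (update ν₁ 0 p) (update ν₂ X S) (.ex2 Y (conj (blockAt X Y) (φ.relativize Y))) ↔
        w.extract p (blockEnd S w.length p) ∈ Lang φ := by
    intro S hS p hp
    have hIco : ∀ z ∈ Set.Ico p (blockEnd S w.length p), z < w.length :=
      fun z hz => hz.2.trans_le blockEnd_le
    simp only [sat_ex2, sat_conj, sat_blockAt, update_self, update_of_ne hXY]
    constructor
    · rintro ⟨T, hT, hTblock, hsat⟩
      rw [(eq_Ico_blockEnd_iff hS hT).1 hTblock] at hsat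
      exact (extract_mem_lang_iff hY h₁ h₂ (lt_blockEnd hp) blockEnd_le (update_self ..)).2 hsat
    · intro h
      exact ⟨_, hIco, (eq_Ico_blockEnd_iff hS hIco).2 rfl,
        (extract_mem_lang_iff hY h₁ h₂ (lt_blockEnd hp) blockEnd_le (update_self ..)).1 h⟩
  rw [star, sat_ex2]
  simp only [sat_conj, sat_firstMem, sat_all, sat_imp, sat_mem, update_self]
  refine exists_congr fun S => ⟨?_, ?_⟩
  · rintro ⟨hS, ⟨-, h0⟩, hfac⟩
    exact ⟨h0, hS, fun p hp => (hblock S hS p (hS p hp)).1 (hfac p (hS p hp) hp)⟩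
  · rintro ⟨h0, hS, hfac⟩
    exact ⟨hS, ⟨List.ne_nil_of_length_pos (hS 0 h0), h0⟩,
      fun p hp hpS => (hblock S hS p hp).2 (hfac p hpS)⟩

theorem lang_star {φ : MSO α} (hXY : X ≠ Y) (hY : Y ∉ φ.vars2) (h₁ : φ.fv1 = ∅)
    (h₂ : φ.fv2 = ∅) :
    Lang (star X Y φ) = {w | w ∈ @KStar.kstar (Language α) _ (Lang φ) ∧ w ≠ []} := by
  ext w
  have hstar := mem_kstar_and_ne_nil_iff (L := Lang φ) (w := w) fun h => h.1 rfl
  exact ⟨fun h => hstar.2 ((sat_star hXY hY h₁ h₂).1 h.2),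
    fun h => ⟨h.2, (sat_star hXY hY h₁ h₂).2 (hstar.1 h)⟩⟩

theorem fv1_star {φ : MSO α} (h₁ : φ.fv1 = ∅) : (star X Y φ).fv1 = ∅ := by
  simp [star, firstMem, blockAt, fv1, h₁]
  decide

theorem fv2_star {φ : MSO α} (hXY : X ≠ Y) (h₂ : φ.fv2 = ∅) : (star X Y φ).fv2 = ∅ := by
  have hrel : (φ.relativize Y).fv2 ⊆ {Y} := by simpa [h₂] using fv2_relativize_subset Y φ
  simp only [star, firstMem, blockAt, fv2, fv2_conj, fv2_all, fv2_imp, fv2_iff]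
  grind

end StarSentence

theorem lang_or (φ ψ : MSO α) : Lang (φ.or ψ) = Lang φ ∪ Lang ψ := by
  ext w
  simp only [Lang, Set.mem_union, Set.mem_ofPred_eq, sat_or]
  tauto

theorem lang_conj (φ ψ : MSO α) : Lang (conj φ ψ) = Lang φ ∩ Lang ψ := by
  ext w
  simp only [Lang, Set.mem_inter_iff, Set.mem_ofPred_eq, sat_conj]
  tauto

theorem lang_not (φ : MSO α) : Lang φ.not = {w | w ≠ []} \ Lang φ := by
  ext w
  simp only [Lang, Set.mem_sdiff, Set.mem_ofPred_eq, sat_not]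
  tauto

namespace Definable

variable {L L₁ L₂ : Set (List α)}

theorem union (h₁ : Definable L₁) (h₂ : Definable L₂) : Definable (L₁ ∪ L₂) := by
  obtain ⟨φ, hφ₁, hφ₂, rfl⟩ := h₁
  obtain ⟨ψ, hψ₁, hψ₂, rfl⟩ := h₂
  exact ⟨φ.or ψ, by simp [fv1, hφ₁, hψ₁], by simp [fv2, hφ₂, hψ₂], (lang_or φ ψ).symm⟩

theorem inter (h₁ : Definable L₁) (h₂ : Definable L₂) : Definable (L₁ ∩ L₂) := by
  obtain ⟨φ, hφ₁, hφ₂, rfl⟩ := h₁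
  obtain ⟨ψ, hψ₁, hψ₂, rfl⟩ := h₂
  exact ⟨conj φ ψ, by simp [hφ₁, hψ₁], by simp [hφ₂, hψ₂], (lang_conj φ ψ).symm⟩

theorem compl (h : Definable L) : Definable ({w | w ≠ []} \ L) := by
  obtain ⟨φ, hφ₁, hφ₂, rfl⟩ := h
  exact ⟨φ.not, hφ₁, hφ₂, (lang_not φ).symm⟩

theorem kstar (h : Definable L) :
    Definable {w | w ∈ @KStar.kstar (Language α) _ L ∧ w ≠ []} := by
  obtain ⟨φ, hφ₁, hφ₂, rfl⟩ := h
  obtain ⟨Y, hY⟩ := Infinite.exists_notMem_finset φ.vars2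
  have hXY : Y + 1 ≠ Y := Nat.succ_ne_self Y
  exact ⟨star (Y + 1) Y φ, fv1_star hφ₁, fv2_star hXY hφ₂, (lang_star hXY hY hφ₁ hφ₂).symm⟩

end Definable

end MSO

theorem mso_definable_closure_general {α : Type} (L L₁ L₂ : Set (List α))
    (hL : MSO.Definable L) (hL₁ : MSO.Definable L₁) (hL₂ : MSO.Definable L₂) :
    MSO.Definable (L₁ ∪ L₂) ∧ MSO.Definable (L₁ ∩ L₂) ∧
    MSO.Definable ({w : List α | w ≠ []} \ L) ∧
    MSO.Definable {w | w ∈ @KStar.kstar (Language α) _ L ∧ w ≠ []} :=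
  ⟨hL₁.union hL₂, hL₁.inter hL₂, hL.compl, hL.kstar⟩

/-- MSO-definable languages over a fixed finite alphabet are
closed under union, intersection, complementation relative to `Σ⁺`, and
Kleene star restricted to nonempty strings. -/
theorem mso_definable_closure {α : Type} [Fintype α] (L L₁ L₂ : Set (List α))
    (hL : MSO.Definable L) (hL₁ : MSO.Definable L₁) (hL₂ : MSO.Definable L₂) :
    MSO.Definable (L₁ ∪ L₂) ∧ MSO.Definable (L₁ ∩ L₂) ∧
    MSO.Definable ({w : List α | w ≠ []} \ L) ∧
    MSO.Definable {w | w ∈ @KStar.kstar (Language α) _ L ∧ w ≠ []} :=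
  mso_definable_closure_general L L₁ L₂ hL hL₁ hL₂
end
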